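/- arXiv:1909.11411 — 2 statements merged into one kernel-verified Lean document; each statement's English description precedes it below -/
import Mathlib

section
/- Let (X, τ) be a real topological vector space and F : X → [-∞,+∞] be level convex. Then the lower semicontinuous envelope Γ_τ(F) is level convex, and Γ_τ(F) = F^{lslc} pointwise. -/
open Filter Topology

variable {X : Type*}

def LevelConvex [AddCommGroup X] [Module ℝ X] (F : X → EReal) : Prop :=
  ∀ x y : X, ∀ t : ℝ, 0 < t → t < 1 →
    F (t • x + (1 - t) • y) ≤ max (F x) (F y)

/-- `Γ_τ(F)` -/
noncomputable def lscEnv [TopologicalSpace X] (F : X → EReal) : X → EReal :=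
  fun x => ⨆ G : {G : X → EReal // LowerSemicontinuous G ∧ G ≤ F}, (G : X → EReal) x

/-- `F^{lc}` -/
noncomputable def lcEnv [AddCommGroup X] [Module ℝ X] (F : X → EReal) : X → EReal :=
  fun x => ⨆ G : {G : X → EReal // LevelConvex G ∧ G ≤ F}, (G : X → EReal) x

/-- `F^{lslc}` -/
noncomputable def lslcEnv [TopologicalSpace X] [AddCommGroup X] [Module ℝ X]
    (F : X → EReal) : X → EReal :=
  fun x => ⨆ G : {G : X → EReal // LowerSemicontinuous G ∧ LevelConvex G ∧ G ≤ F},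
    (G : X → EReal) x

/-!
Every sublevel set of `Γ_τ(F)` is an intersection of closures of sublevel sets
of `F`, namely `L_λ(Γ_τ(F)) = ⋂_{μ > λ} cl L_μ(F)`. For level convex `F` these closures are
convex, so `Γ_τ(F)` is level convex; being lower semicontinuous and below `F`, it is then one
of the competitors in `F^{lslc}`, which forces `Γ_τ(F) = F^{lslc}`.
-/

theorem levelConvex_iff_convex_setOf_le [AddCommGroup X] [Module ℝ X] {F : X → EReal} :
    LevelConvex F ↔ ∀ l, Convex ℝ {x | F x ≤ l} := by
  have hq : QuasiconvexOn ℝ Set.univ F ↔ ∀ l, Convex ℝ {x | F x ≤ l} := by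
    simp only [QuasiconvexOn, Set.mem_univ, true_and]
  rw [← hq, quasiconvexOn_iff_le_max]
  refine ⟨fun hF => ⟨convex_univ, fun x _ y _ a b ha hb hab => ?_⟩,
    fun hF x y t ht₀ ht₁ => hF.2 trivial trivial ht₀.le (by linarith) (by ring)⟩
  rcases ha.eq_or_lt with rfl | ha
  · obtain rfl : b = 1 := by simpa using hab
    simp
  rcases hb.eq_or_lt with rfl | hb
  · obtain rfl : a = 1 := by simpa using hab
    simp
  obtain rfl : b = 1 - a := by linarith
  exact hF x y a ha (by linarith)

theorem IsClosed.lowerSemicontinuous_ite {α β : Type*} [TopologicalSpace α] [Preorder β]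
    {s : Set α} [DecidablePred (· ∈ s)] (hs : IsClosed s) {a b : β} (hab : a ≤ b) :
    LowerSemicontinuous fun x => if x ∈ s then a else b := by
  intro x y hy
  dsimp only
  by_cases hx : x ∈ s
  · simp only [hx, if_true] at hy
    refine Eventually.of_forall fun x' => ?_
    split_ifs
    exacts [hy, hy.trans_le hab]
  · simp only [hx, if_false] at hy
    filter_upwards [hs.isOpen_compl.mem_nhds hx] with x' hx'
    simpa [Set.notMem_of_mem_compl hx'] using hy

section Envelopes

variable [TopologicalSpace X]

theorem lscEnv_lowerSemicontinuous (F : X → EReal) : LowerSemicontinuous (lscEnv F) :=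
  lowerSemicontinuous_iSup fun G => G.2.1

theorem lscEnv_le (F : X → EReal) : lscEnv F ≤ F :=
  fun x => iSup_le fun G => G.2.2 x

theorem le_lscEnv {F G : X → EReal} (hG : LowerSemicontinuous G) (hGF : G ≤ F) :
    G ≤ lscEnv F :=
  fun x => le_iSup (fun G : {G : X → EReal // LowerSemicontinuous G ∧ G ≤ F} =>
    (G : X → EReal) x) ⟨G, hG, hGF⟩

theorem mem_closure_setOf_le_of_lscEnv_lt {F : X → EReal} {x : X} {μ : EReal}
    (h : lscEnv F x < μ) : x ∈ closure {w | F w ≤ μ} := by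
  classical
  by_contra hx
  -- `⊥` on the closure and `μ` off it is a lower semicontinuous minorant of `F`.
  have hG := le_lscEnv (F := F)
    ((isClosed_closure (s := {w | F w ≤ μ})).lowerSemicontinuous_ite (bot_le : ⊥ ≤ μ))
    (fun w => by
      dsimp only
      split_ifs with hw
      · exact bot_le
      · exact (not_le.1 fun hFw => hw (subset_closure hFw)).le) x
  simp only [hx, if_false] at hG
  exact (hG.trans_lt h).false

theorem setOf_lscEnv_le_eq_iInter_closure (F : X → EReal) (l : EReal) :
    {x | lscEnv F x ≤ l} = ⋂ μ > l, closure {w | F w ≤ μ} := by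
  ext x
  simp only [Set.mem_ofPred_eq, Set.mem_iInter]
  refine ⟨fun hx μ hμ => mem_closure_setOf_le_of_lscEnv_lt (hx.trans_lt hμ),
    fun hx => le_of_forall_gt_imp_ge_of_dense fun μ hμ => ?_⟩
  have hclosed : IsClosed {w | lscEnv F w ≤ μ} :=
    (lscEnv_lowerSemicontinuous F).isClosed_preimage μ
  exact hclosed.closure_subset_iff.2 (fun w hw => (lscEnv_le F w).trans hw) (hx μ hμ)

theorem le_lslcEnv [AddCommGroup X] [Module ℝ X] {F G : X → EReal}
    (hG : LowerSemicontinuous G) (hGc : LevelConvex G) (hGF : G ≤ F) : G ≤ lslcEnv F :=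
  fun x => le_iSup (fun G : {G : X → EReal //
    LowerSemicontinuous G ∧ LevelConvex G ∧ G ≤ F} => (G : X → EReal) x) ⟨G, hG, hGc, hGF⟩

theorem lslcEnv_le_lscEnv [AddCommGroup X] [Module ℝ X] (F : X → EReal) :
    lslcEnv F ≤ lscEnv F :=
  fun x => iSup_le fun G => le_lscEnv G.2.1 G.2.2.2 x

theorem levelConvex_lscEnv [AddCommGroup X] [Module ℝ X] [IsTopologicalAddGroup X]
    [ContinuousSMul ℝ X] {F : X → EReal} (hF : LevelConvex F) : LevelConvex (lscEnv F) := by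
  rw [levelConvex_iff_convex_setOf_le] at hF ⊢
  intro l
  rw [setOf_lscEnv_le_eq_iInter_closure]
  exact convex_iInter₂ fun μ _ => (hF μ).closure

end Envelopes

/-- if `F` is level convex then `Γ_τ(F)` is level convex and
`Γ_τ(F) = F^{lslc}`. -/
theorem stmt1 [TopologicalSpace X] [AddCommGroup X] [Module ℝ X]
    [IsTopologicalAddGroup X] [ContinuousSMul ℝ X] (F : X → EReal)
    (hF : LevelConvex F) :
    LevelConvex (lscEnv F) ∧ lscEnv F = lslcEnv F := by
  have hlc := levelConvex_lscEnv hF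
  exact ⟨hlc, le_antisymm (le_lslcEnv (lscEnv_lowerSemicontinuous F) hlc (lscEnv_le F))
    (lslcEnv_le_lscEnv F)⟩
end

section
/- Let f : ℝ^{d×N} → [-∞,+∞] be lower semicontinuous and coercive (f(ξ) → +∞ as |ξ| → +∞). Then for every λ ∈ ℝ, co(L_λ(f)) = L_λ(f^{lc}). -/
/-!
Lower semicontinuity and coercivity make every sublevel set of `f` compact, so by Carathéodory
the convex hull `co L_λ(f)` is compact, in particular closed. Since `f^{lc}` is level convex and
below `f`, its sublevel sets are convex and contain those of `f`. Conversely, a point `ξ` outside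
`co L_λ(f)` is strictly separated from it by a closed half-space `H ∋ ξ`. Then `f > λ` on `H`,
and compactness of `H ∩ L_{λ+1}(f)` upgrades this to `f ≥ c` on `H` for some `c > λ`. The
function equal to `c` on `H` and to `⊥` off `H` is level convex, because its nontrivial
sublevel set is the open half-space `Hᶜ`; as it lies below `f`, we get `f^{lc}(ξ) ≥ c > λ`.
-/

open Filter Topology

variable {X : Type*}

section LevelConvex

variable [AddCommGroup X] [Module ℝ X]

theorem LevelConvex.convex_sublevel {G : X → EReal} (hG : LevelConvex G) (c : EReal) :
    Convex ℝ {x | G x ≤ c} := by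
  rintro x hx y hy a b ha hb hab
  rcases ha.eq_or_lt with rfl | ha
  · simpa [(zero_add b).symm.trans hab] using hy
  rcases hb.eq_or_lt with rfl | hb
  · simpa [(add_zero a).symm.trans hab] using hx
  obtain rfl : b = 1 - a := by linarith
  exact (hG x y a ha (by linarith)).trans (max_le hx hy)

theorem le_lcEnv {F G : X → EReal} (hG : LevelConvex G) (hGF : G ≤ F) : G ≤ lcEnv F :=
  fun x => le_iSup (fun G : {G : X → EReal // LevelConvex G ∧ G ≤ F} => (G : X → EReal) x)
    ⟨G, hG, hGF⟩

theorem lcEnv_le_self (F : X → EReal) : lcEnv F ≤ F :=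
  fun x => iSup_le fun G => G.2.2 x

theorem levelConvex_lcEnv (F : X → EReal) : LevelConvex (lcEnv F) :=
  fun x y t ht₀ ht₁ => iSup_le fun G =>
    (G.2.1 x y t ht₀ ht₁).trans (max_le_max (le_lcEnv G.2.1 G.2.2 x) (le_lcEnv G.2.1 G.2.2 y))

open Classical in
theorem levelConvex_ite_mem {s : Set X} (hs : Convex ℝ sᶜ) (m : EReal) :
    LevelConvex fun x => if x ∈ s then m else ⊥ := by
  intro x y t ht₀ ht₁
  by_cases hz : t • x + (1 - t) • y ∈ s
  · by_cases hx : x ∈ s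
    · simp [hz, hx]
    by_cases hy : y ∈ s
    · simp [hz, hy]
    exact (hs hx hy ht₀.le (by linarith) (by ring) hz).elim
  · simp [hz]

theorem convexHull_sublevel_subset_sublevel_lcEnv (f : X → EReal) (c : EReal) :
    convexHull ℝ {x | f x ≤ c} ⊆ {x | lcEnv f x ≤ c} :=
  convexHull_min (fun x hx => (lcEnv_le_self f x).trans hx)
    ((levelConvex_lcEnv f).convex_sublevel c)

end LevelConvex

theorem LowerSemicontinuous.exists_lt_forall_le {β : Type*} [TopologicalSpace X] [LinearOrder β]
    {f : X → β} (hf : LowerSemicontinuous f) {s : Set X} {a b : β} (hab : a < b)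
    (hs : IsCompact (s ∩ {x | f x ≤ b})) (hlt : ∀ x ∈ s, a < f x) :
    ∃ c, a < c ∧ ∀ x ∈ s, c ≤ f x := by
  rcases (s ∩ {x | f x ≤ b}).eq_empty_or_nonempty with hempty | hne
  · refine ⟨b, hab, fun x hx => le_of_not_ge fun hxb => ?_⟩
    exact hempty.subset ⟨hx, hxb⟩
  obtain ⟨x₀, ⟨hx₀s, -⟩, hmin⟩ := (hf.lowerSemicontinuousOn _).exists_isMinOn hne hs
  refine ⟨min (f x₀) b, lt_min (hlt x₀ hx₀s) hab, fun x hx => ?_⟩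
  rcases le_total (f x) b with hxb | hbx
  · exact (min_le_left _ _).trans (hmin ⟨hx, hxb⟩)
  · exact (min_le_right _ _).trans hbx

theorem sublevel_lcEnv_subset_convexHull_sublevel [TopologicalSpace X] [AddCommGroup X]
    [Module ℝ X] [IsTopologicalAddGroup X] [ContinuousSMul ℝ X] [LocallyConvexSpace ℝ X]
    {f : X → EReal} (hf : LowerSemicontinuous f) (hcompact : ∀ c : ℝ, IsCompact {x | f x ≤ c})
    (a : ℝ) (hclosed : IsClosed (convexHull ℝ {x | f x ≤ a})) :
    {x | lcEnv f x ≤ a} ⊆ convexHull ℝ {x | f x ≤ a} := by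
  intro ξ hξ
  by_contra hξL
  obtain ⟨ℓ, u, hℓL, huξ⟩ :=
    geometric_hahn_banach_closed_point (convex_convexHull ℝ _) hclosed hξL
  set H := {x | u ≤ ℓ x}
  have hH_closed : IsClosed H := isClosed_le continuous_const ℓ.continuous
  have hH_compl : Convex ℝ Hᶜ := by
    simpa only [H, Set.compl_ofPred, not_le] using convex_halfSpace_lt (f := ℓ) ℓ.isLinear u
  have hfH : ∀ x ∈ H, (a : EReal) < f x := fun x hxH => lt_of_not_ge fun hxa =>
    (hℓL x (subset_convexHull ℝ _ hxa)).not_ge hxH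
  obtain ⟨c, hac, hcf⟩ := hf.exists_lt_forall_le (EReal.coe_lt_coe_iff.2 (lt_add_one a))
    ((hcompact (a + 1)).inter_left hH_closed) hfH
  classical
  have hG : (fun x => if x ∈ H then c else ⊥) ≤ lcEnv f := by
    refine le_lcEnv (levelConvex_ite_mem hH_compl c) fun x => ?_
    split_ifs with hx
    exacts [hcf x hx, bot_le]
  have hcξ : c ≤ lcEnv f ξ := by simpa [H, huξ.le] using hG ξ
  exact (hac.trans_le (hcξ.trans hξ)).false

theorem exists_fin_sum_smul_eq_of_mem_convexHull {𝕜 E : Type*} [Field 𝕜] [LinearOrder 𝕜]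
    [IsStrictOrderedRing 𝕜] [AddCommGroup E] [Module 𝕜 E] [FiniteDimensional 𝕜 E] {s : Set E}
    {x : E} (hx : x ∈ convexHull 𝕜 s) :
    ∃ k ≤ Module.finrank 𝕜 E + 1, ∃ w ∈ stdSimplex 𝕜 (Fin k), ∃ z : Fin k → E,
      (∀ i, z i ∈ s) ∧ ∑ i, w i • z i = x := by
  obtain ⟨ι, _, z, w, hzs, hz_indep, hw_pos, hw_sum, rfl⟩ :=
    eq_pos_convex_span_of_mem_convexHull hx
  let e := (Fintype.equivFin ι).symm
  refine ⟨Fintype.card ι, ?_, w ∘ e, ⟨fun i => (hw_pos _).le, ?_⟩, z ∘ e,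
    fun i => hzs ⟨_, rfl⟩, e.sum_comp fun i => w i • z i⟩
  · exact hz_indep.card_le_finrank_succ.trans (Nat.add_le_add_right (Submodule.finrank_le _) 1)
  · rw [← hw_sum]
    exact e.sum_comp w

protected theorem IsCompact.convexHull {E : Type*} [AddCommGroup E] [Module ℝ E]
    [TopologicalSpace E] [ContinuousAdd E] [ContinuousSMul ℝ E] [FiniteDimensional ℝ E] {s : Set E}
    (hs : IsCompact s) : IsCompact (convexHull ℝ s) := by
  let combo (k : ℕ) (p : (Fin k → ℝ) × (Fin k → E)) : E := ∑ i, p.1 i • p.2 i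
  have hcombo : ∀ k, Continuous (combo k) := fun k => continuous_finsetSum _ fun i _ =>
    ((continuous_apply i).comp continuous_fst).smul ((continuous_apply i).comp continuous_snd)
  have hcover : convexHull ℝ s = ⋃ k : Fin (Module.finrank ℝ E + 2),
      combo k '' (stdSimplex ℝ (Fin k) ×ˢ Set.univ.pi fun _ => s) := by
    refine subset_antisymm (fun x hx => ?_) (Set.iUnion_subset fun k => ?_)
    · obtain ⟨k, hk, w, hw, z, hzs, rfl⟩ := exists_fin_sum_smul_eq_of_mem_convexHull hx
      exact Set.mem_iUnion.2 ⟨⟨k, by omega⟩, (w, z), ⟨hw, fun i _ => hzs i⟩, rfl⟩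
    · rintro _ ⟨⟨w, z⟩, ⟨⟨hw_nonneg, hw_sum⟩, hzs⟩, rfl⟩
      exact (convex_convexHull ℝ s).sum_mem (fun i _ => hw_nonneg i) hw_sum
        fun i _ => subset_convexHull ℝ s (hzs i (Set.mem_univ i))
  rw [hcover]
  exact isCompact_iUnion fun k =>
    (isCompact_stdSimplex ℝ (Fin k) |>.prod (isCompact_univ_pi fun _ => hs)).image (hcombo k)

theorem isCompact_sublevel_of_coercive {E : Type*} [NormedAddCommGroup E] [ProperSpace E]
    {f : E → EReal} (hf : LowerSemicontinuous f)
    (hcoer : ∀ M : ℝ, ∃ R : ℝ, ∀ x, R ≤ ‖x‖ → (M : EReal) ≤ f x) (c : ℝ) :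
    IsCompact {x | f x ≤ c} := by
  obtain ⟨R, hR⟩ := hcoer (c + 1)
  refine (isCompact_closedBall 0 R).of_isClosed_subset (hf.isClosed_preimage c) fun x hx => ?_
  rw [mem_closedBall_zero_iff]
  by_contra! hRx
  exact ((hR x hRx.le).trans hx).not_gt (EReal.coe_lt_coe_iff.2 (lt_add_one c))

theorem convexHull_sublevel_eq_sublevel_lcEnv {E : Type*} [NormedAddCommGroup E]
    [NormedSpace ℝ E] [FiniteDimensional ℝ E] {f : E → EReal} (hf : LowerSemicontinuous f)
    (hcompact : ∀ c : ℝ, IsCompact {x | f x ≤ c}) (a : ℝ) :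
    convexHull ℝ {x | f x ≤ a} = {x | lcEnv f x ≤ a} :=
  subset_antisymm (convexHull_sublevel_subset_sublevel_lcEnv f a)
    (sublevel_lcEnv_subset_convexHull_sublevel hf hcompact a (hcompact a).convexHull.isClosed)

/-- if `f` is lower semicontinuous and coercive then
`co(L_λ(f)) = L_λ(f^{lc})` for every real `λ`. -/
theorem stmt8 (d N : ℕ) (f : EuclideanSpace ℝ (Fin d × Fin N) → EReal)
    (hlsc : LowerSemicontinuous f)
    (hcoer : ∀ M : ℝ, ∃ R : ℝ, ∀ ξ, R ≤ ‖ξ‖ → (M : EReal) ≤ f ξ) (lam : ℝ) :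
    convexHull ℝ {ξ | f ξ ≤ (lam : EReal)} = {ξ | lcEnv f ξ ≤ (lam : EReal)} :=
  convexHull_sublevel_eq_sublevel_lcEnv hlsc (isCompact_sublevel_of_coercive hlsc hcoer) lam
end
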